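/- Let K₁ and K₂ be distinct Galois number fields of odd prime degrees whose Hilbert class fields H(K₁) and H(K₂) are abelian over ℚ. If the compositum K₁K₂ is ramified over Kᵢ, then H(Kᵢ) ∩ K₁K₂ = Kᵢ. -/

import Mathlib

open NumberField IntermediateField Module
open scoped nonZeroDivisors

set_option maxHeartbeats 1000000
set_option synthInstance.maxHeartbeats 400000

noncomputable section

/-- A fixed algebraic closure of ℚ in which all our number fields live. -/
abbrev Qbar : Type := AlgebraicClosure ℚ

/-- The cyclotomic field ℚ(ζ_n) inside `Qbar`, obtained by adjoining all n-th roots of unity. -/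
def cyclo (n : ℕ) : IntermediateField ℚ Qbar :=
  IntermediateField.adjoin ℚ {x : Qbar | x ^ n = 1}

/-- The inclusion `K →+* L` for `K ≤ L`. -/
def incl {K L : IntermediateField ℚ Qbar} (h : K ≤ L) : ↥K →+* ↥L :=
  (IntermediateField.inclusion h).toRingHom

/-- The induced map on rings of integers. -/
def oIncl {K L : IntermediateField ℚ Qbar} (h : K ≤ L) : 𝓞 ↥K →+* 𝓞 ↥L :=
  RingOfIntegers.mapRingHom (incl h)

/-- The extension `L/K` is unramified at all finite primes of `K`. -/
def UnramifiedAtFinitePrimes {K L : IntermediateField ℚ Qbar} (h : K ≤ L) : Prop :=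
  ∀ (p : Ideal (𝓞 ↥K)) (P : Ideal (𝓞 ↥L)), p.IsPrime → P.IsPrime → p ≠ ⊥ →
    Ideal.comap (oIncl h) P = p → sSup {n : ℕ | Ideal.map (oIncl h) p ≤ P ^ n} = 1

/-- The extension `L/K` is unramified at all infinite places of `K`:
no real place of `K` lies below a complex place of `L`. -/
def UnramifiedAtInfinitePlaces' {K L : IntermediateField ℚ Qbar} (h : K ≤ L) : Prop :=
  ∀ w : InfinitePlace ↥L, (w.comap (incl h)).IsReal → w.IsReal

/-- The extension `L/K` is unramified at all places of `K`. -/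
def UnramifiedAtAllPlaces {K L : IntermediateField ℚ Qbar} (h : K ≤ L) : Prop :=
  UnramifiedAtFinitePrimes h ∧ UnramifiedAtInfinitePlaces' h

/-- The extension `L/K` is ramified: some place of `K` ramifies in `L`. -/
def IsRamifiedExt {K L : IntermediateField ℚ Qbar} (h : K ≤ L) : Prop :=
  ¬ UnramifiedAtAllPlaces h

/-- `L/K` is an abelian extension. -/
def IsAbelianOver {K L : IntermediateField ℚ Qbar} (h : K ≤ L) : Prop :=
  IsGalois ↥K ↥(IntermediateField.extendScalars h) ∧
    ∀ σ τ : ↥(IntermediateField.extendScalars h) ≃ₐ[↥K] ↥(IntermediateField.extendScalars h),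
      σ * τ = τ * σ

/-- `L/K` is a cyclic extension. -/
def IsCyclicOver {K L : IntermediateField ℚ Qbar} (h : K ≤ L) : Prop :=
  IsGalois ↥K ↥(IntermediateField.extendScalars h) ∧
    IsCyclic (↥(IntermediateField.extendScalars h) ≃ₐ[↥K] ↥(IntermediateField.extendScalars h))

/-- `H` is abelian over ℚ. -/
def IsAbelianOverRat (H : IntermediateField ℚ Qbar) : Prop :=
  IsGalois ℚ ↥H ∧ ∀ σ τ : ↥H ≃ₐ[ℚ] ↥H, σ * τ = τ * σ

/-- `H/K` is an abelian extension unramified at all places of `K`. -/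
def IsUnramifiedAbelianExt (K H : IntermediateField ℚ Qbar) : Prop :=
  ∃ h : K ≤ H, IsAbelianOver h ∧ UnramifiedAtAllPlaces h

/-- `H` is the Hilbert class field of `K`: the maximal abelian extension of `K`
unramified at all places of `K`. -/
def IsHilbertClassField (K H : IntermediateField ℚ Qbar) : Prop :=
  IsUnramifiedAbelianExt K H ∧ ∀ H', IsUnramifiedAbelianExt K H' → H' ≤ H

/-- `H/K` is an extension which is abelian over ℚ and unramified at all finite primes of `K`. -/
def IsGenusExt (K H : IntermediateField ℚ Qbar) : Prop :=
  ∃ h : K ≤ H, IsAbelianOverRat H ∧ UnramifiedAtFinitePrimes h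

/-- `G` is the genus field of `K`: the maximal extension of `K` abelian over ℚ and
unramified at all finite primes of `K`. -/
def IsGenusField (K G : IntermediateField ℚ Qbar) : Prop :=
  IsGenusExt K G ∧ ∀ H, IsGenusExt K H → H ≤ G

/-- `f` is the conductor of `K`: the least positive integer `n` with `K ⊆ ℚ(ζ_n)`. -/
def IsConductor (K : IntermediateField ℚ Qbar) (f : ℕ) : Prop :=
  0 < f ∧ K ≤ cyclo f ∧ ∀ m : ℕ, 0 < m → K ≤ cyclo m → f ≤ m

/-- The automorphism `σ` of `ℚ(ζ_f)` fixes the subfield `L` pointwise, i.e. `σ ∈ Gal(ℚ(ζ_f)/L)`. -/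
def FixesPointwise {F : IntermediateField ℚ Qbar} (σ : ↥F ≃ₐ[ℚ] ↥F)
    (L : IntermediateField ℚ Qbar) : Prop :=
  ∀ x : ↥F, (x : Qbar) ∈ L → σ x = x

/-- The automorphism `σ` of `ℚ(ζ_f)` corresponds to the residue class `d mod f`, i.e. acts as
`ζ ↦ ζ^d` on `f`-th roots of unity. -/
def ActsAsPow (f d : ℕ) (σ : ↥(cyclo f) ≃ₐ[ℚ] ↥(cyclo f)) : Prop :=
  ∀ x : ↥(cyclo f), (x : Qbar) ^ f = 1 → (σ x : Qbar) = (x : Qbar) ^ d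

/-- The rational prime `p` splits completely in `L`: every prime of `𝓞 L` above `p`
has ramification index `1` and inertia degree `1` (i.e. absolute norm `p`). -/
def SplitsCompletelyIn (p : ℕ) (L : IntermediateField ℚ Qbar) [NumberField ↥L] : Prop :=
  ∀ P : Ideal (𝓞 ↥L), P.IsPrime →
    Ideal.comap (algebraMap ℤ (𝓞 ↥L)) P = Ideal.span {(p : ℤ)} →
    sSup {n : ℕ | Ideal.map (algebraMap ℤ (𝓞 ↥L)) (Ideal.span {(p : ℤ)}) ≤ P ^ n} = 1 ∧
      Ideal.absNorm P = p

/-- A nonzero ideal `a` of `𝓞 K` is Euclidean for the function `ψ` (Lenstra): for every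
nonzero ideal `b` and every `x ∈ b⁻¹a \ a` there is `y ∈ a` with `ψ(a⁻¹b(x-y)) < ψ(b)`. -/
def IsEuclideanFor {K : Type} [Field K] [NumberField K] {W : Type} [LinearOrder W]
    (ψ : Ideal (𝓞 K) → W) (a : Ideal (𝓞 K)) : Prop :=
  a ≠ 0 ∧ ∀ b : Ideal (𝓞 K), b ≠ 0 → ∀ x : K,
    x ∈ ((b : FractionalIdeal (𝓞 K)⁰ K)⁻¹ * (a : FractionalIdeal (𝓞 K)⁰ K)) →
    x ∉ (a : FractionalIdeal (𝓞 K)⁰ K) →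
    ∃ y ∈ (a : FractionalIdeal (𝓞 K)⁰ K), ∃ c : Ideal (𝓞 K),
      (c : FractionalIdeal (𝓞 K)⁰ K) =
        (a : FractionalIdeal (𝓞 K)⁰ K)⁻¹ * (b : FractionalIdeal (𝓞 K)⁰ K) *
          FractionalIdeal.spanSingleton (𝓞 K)⁰ (x - y) ∧
      ψ c < ψ b

/-- The ideal class `C` is a Euclidean ideal class: some integral ideal in the class `C` is
Euclidean for some function `ψ` into a well-ordered set. -/
def IsEuclideanIdealClass {K : Type} [Field K] [NumberField K] (C : ClassGroup (𝓞 K)) : Prop :=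
  ∃ (a : Ideal (𝓞 K)) (ha : a ∈ (Ideal (𝓞 K))⁰), ClassGroup.mk0 ⟨a, ha⟩ = C ∧
    ∃ (W : Type) (_ : LinearOrder W) (_ : WellFoundedLT W) (ψ : Ideal (𝓞 K) → W),
      IsEuclideanFor ψ a

/-- The number field `K` has a Euclidean ideal class. -/
def HasEuclideanIdealClass (K : Type) [Field K] [NumberField K] : Prop :=
  ∃ C : ClassGroup (𝓞 K), IsEuclideanIdealClass C

/-- `t` is the reduction of the field element `a` modulo the prime ideal `𝔭`:
`a = r/s` with `r, s` integral, `s ∉ 𝔭`, and `t·s̄ = r̄` in `𝓞 K / 𝔭`. -/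
def ReducesTo {K : Type} [Field K] [NumberField K] (a : K) (𝔭 : Ideal (𝓞 K))
    (t : 𝓞 K ⧸ 𝔭) : Prop :=
  ∃ r s : 𝓞 K, s ∉ 𝔭 ∧ (algebraMap (𝓞 K) K s) * a = algebraMap (𝓞 K) K r ∧
    Ideal.Quotient.mk 𝔭 r = t * Ideal.Quotient.mk 𝔭 s

/-- `a ∈ K^×` is a primitive root modulo `𝔭`: its reduction generates `(𝓞 K / 𝔭)^×`. -/
def IsPrimitiveRootMod {K : Type} [Field K] [NumberField K] (a : K)
    (𝔭 : Ideal (𝓞 K)) : Prop :=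
  ∃ t : 𝓞 K ⧸ 𝔭, ReducesTo a 𝔭 t ∧ ∀ z : 𝓞 K ⧸ 𝔭, z ≠ 0 → ∃ n : ℕ, t ^ n = z

/-- `a ∈ K^×` is a quadratic non-residue modulo `𝔭`: its reduction is not a square. -/
def IsQuadNonResidueMod {K : Type} [Field K] [NumberField K] (a : K)
    (𝔭 : Ideal (𝓞 K)) : Prop :=
  ∃ t : 𝓞 K ⧸ 𝔭, ReducesTo a 𝔭 t ∧ ∀ z : 𝓞 K ⧸ 𝔭, z ^ 2 ≠ t

end

/-!
Let `M = H(K) ∩ KK'`. As `K'/ℚ` is Galois of prime degree `q`, `[KK' : K]` divides `q`, so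
`[M : K]` is `1` or `q`. In the second case `KK' = M ⊆ H(K)`, and unramifiedness descends from
`H(K)/K` to its subextension `KK'/K`, contradicting the hypothesis. Hence `M = K`.
-/

lemma sSup_map_le_pow_eq_one_iff {R S : Type*} [CommRing R] [CommRing S] {f : R →+* S}
    {p : Ideal R} {P : Ideal S} (hle : p.map f ≤ P) :
    sSup {n : ℕ | p.map f ≤ P ^ n} = 1 ↔ ¬ p.map f ≤ P ^ 2 := by
  refine ⟨fun h h2 ↦ ?_, fun h2 ↦ ?_⟩
  · by_cases hb : BddAbove {n : ℕ | p.map f ≤ P ^ n}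
    · have := le_csSup hb h2
      omega
    · rw [csSup_of_not_bddAbove hb, csSup_empty] at h
      exact zero_ne_one h
  · let := f.toAlgebra
    exact Ideal.ramificationIdx'_spec (by rw [pow_one]; exact hle) h2

section Tower

variable {K L H : IntermediateField ℚ Qbar} (h₁ : K ≤ L) (h₂ : L ≤ H)

lemma oIncl_injective : Function.Injective (oIncl h₁) := fun _ _ hab ↦
  RingOfIntegers.ext ((incl h₁).injective (congrArg RingOfIntegers.val hab))

lemma incl_trans : incl (h₁.trans h₂) = (incl h₂).comp (incl h₁) := rfl

lemma oIncl_trans : oIncl (h₁.trans h₂) = (oIncl h₂).comp (oIncl h₁) := rfl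

lemma UnramifiedAtFinitePrimes.of_trans (hu : UnramifiedAtFinitePrimes (h₁.trans h₂)) :
    UnramifiedAtFinitePrimes h₁ := by
  intro p P hp hP hp0 hPp
  have hle : p.map (oIncl h₁) ≤ P := hPp ▸ Ideal.map_comap_le
  rw [sSup_map_le_pow_eq_one_iff hle]
  intro hP2
  let : Algebra (𝓞 L) (𝓞 H) := (oIncl h₂).toAlgebra
  have : Algebra.IsIntegral (𝓞 L) (𝓞 H) := Algebra.IsIntegral.tower_top ℤ
  have hker : RingHom.ker (algebraMap (𝓞 L) (𝓞 H)) = ⊥ :=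
    (RingHom.injective_iff_ker_eq_bot _).1 (oIncl_injective h₂)
  obtain ⟨Q, hQ, hQP⟩ := Ideal.exists_ideal_over_prime_of_isIntegral_of_isDomain (S := 𝓞 H) P
    (hker.trans_le bot_le)
  have hQp : Q.comap (oIncl (h₁.trans h₂)) = p := by
    rw [oIncl_trans, ← Ideal.comap_comap, ← hPp, ← hQP]
    rfl
  have hQ2 : p.map (oIncl (h₁.trans h₂)) ≤ Q ^ 2 :=
    calc p.map (oIncl (h₁.trans h₂)) = (p.map (oIncl h₁)).map (oIncl h₂) := by
          rw [oIncl_trans, Ideal.map_map]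
      _ ≤ (P ^ 2).map (oIncl h₂) := Ideal.map_mono hP2
      _ = (P.map (oIncl h₂)) ^ 2 := Ideal.map_pow _ _ _
      _ ≤ Q ^ 2 := Ideal.pow_right_mono (Ideal.map_le_of_le_comap hQP.ge) 2
  exact (sSup_map_le_pow_eq_one_iff (hQ2.trans (Ideal.pow_le_self two_ne_zero))).1
    (hu p Q hp hQ hp0 hQp) hQ2

lemma UnramifiedAtInfinitePlaces'.of_trans (hu : UnramifiedAtInfinitePlaces' (h₁.trans h₂)) :
    UnramifiedAtInfinitePlaces' h₁ := by
  intro w hw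
  let : Algebra L H := (incl h₂).toAlgebra
  have : Algebra.IsAlgebraic ℚ Qbar := AlgebraicClosure.isAlgebraic ℚ
  have : Algebra.IsAlgebraic ℚ H := IntermediateField.isAlgebraic_tower_bot (L := Qbar)
  have : Algebra.IsAlgebraic L H := Algebra.IsAlgebraic.tower_top (K := ℚ) L
  obtain ⟨w', rfl⟩ := InfinitePlace.comap_surjective (K := H) w
  exact (hu w' (by rwa [incl_trans, InfinitePlace.comap_comp])).comap _

lemma UnramifiedAtAllPlaces.of_trans (hu : UnramifiedAtAllPlaces (h₁.trans h₂)) :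
    UnramifiedAtAllPlaces h₁ :=
  ⟨UnramifiedAtFinitePrimes.of_trans h₁ h₂ hu.1, UnramifiedAtInfinitePlaces'.of_trans h₁ h₂ hu.2⟩

end Tower

namespace IntermediateField

theorem relfinrank_sup_dvd_finrank {F E : Type*} [Field F] [Field E] [Algebra F E]
    (K K' : IntermediateField F E) [FiniteDimensional F K] [FiniteDimensional F K']
    [hK' : IsGalois F K'] : K.relfinrank (K ⊔ K') ∣ finrank F K' := by
  -- restriction embeds `Gal(KK'/K)` into `Gal(K'/F)`
  let A := restrict (le_sup_right : K' ≤ K ⊔ K')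
  let B := restrict (le_sup_left : K ≤ K ⊔ K')
  have hAB : A ⊔ B = ⊤ := by
    rw [← lift_inj, lift_top, lift_sup, lift_restrict, lift_restrict, sup_comm]
  have : IsGalois F A := IsGalois.of_algEquiv (restrictAlgEquiv _)
  have : IsGalois B ↥(K ⊔ K') := IsGalois.sup_right A B hAB
  have hB : B = K.comap (K ⊔ K').val := by ext x; exact mem_restrict _ x
  have hrel : K.relfinrank (K ⊔ K') = finrank B ↥(K ⊔ K') := by
    have htop : (K ⊔ K').comap (K ⊔ K').val = ⊤ := eq_top_iff.2 fun x _ ↦ x.2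
    rw [← relfinrank_top_right, ← htop, hB, relfinrank_comap_comap_eq_relfinrank_of_le _ _ _
      (fieldRange_val _).ge]
  rw [hrel, (restrictAlgEquiv (le_sup_right : K' ≤ K ⊔ K')).toLinearEquiv.finrank_eq,
    ← IsGalois.card_aut_eq_finrank, ← IsGalois.card_aut_eq_finrank]
  exact Subgroup.card_dvd_of_injective _ (restrictRestrictAlgEquivMapHom_injective A B hAB)

end IntermediateField

theorem inf_sup_eq_of_isRamifiedExt {K K' L H : IntermediateField ℚ Qbar}
    [FiniteDimensional ℚ ↥K] [FiniteDimensional ℚ ↥K'] (hgal : IsGalois ℚ ↥K')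
    (hq : (finrank ℚ ↥K').Prime)
    (hL : K ⊔ K' = L) {hKL : K ≤ L} (hram : IsRamifiedExt hKL) {hKH : K ≤ H}
    (hH : UnramifiedAtAllPlaces hKH) : H ⊓ L = K := by
  subst hL
  have hKM : K ≤ H ⊓ (K ⊔ K') := le_inf hKH hKL
  have hdvd : K.relfinrank (H ⊓ (K ⊔ K')) * (H ⊓ (K ⊔ K')).relfinrank (K ⊔ K') ∣ finrank ℚ K' := by
    rw [relfinrank_mul_relfinrank hKM inf_le_right]
    -- `hgal` is stated for the ℚ-algebra structure `DivisionRing.toRatAlgebra` on `K'`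
    exact relfinrank_sup_dvd_finrank K K' (hK' := by convert hgal; exact Subsingleton.elim _ _)
  rcases (Nat.dvd_prime hq).1 (dvd_of_mul_right_dvd hdvd) with hone | hprime
  · exact le_antisymm (relfinrank_eq_one_iff.1 hone) hKM
  · rw [hprime] at hdvd
    have hsup : (H ⊓ (K ⊔ K')).relfinrank (K ⊔ K') = 1 :=
      Nat.dvd_one.1 ((Nat.mul_dvd_mul_iff_left hq.pos).1 (by rwa [mul_one]))
    exact absurd (hH.of_trans hKL ((relfinrank_eq_one_iff.1 hsup).trans inf_le_left)) hram

theorem statement10_general (K₁ K₂ : IntermediateField ℚ Qbar)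
    (hgal₁ : IsGalois ℚ ↥K₁) (hgal₂ : IsGalois ℚ ↥K₂)
    (hdeg₁ : (finrank ℚ ↥K₁).Prime)
    (hdeg₂ : (finrank ℚ ↥K₂).Prime)
    (H₁ H₂ : IntermediateField ℚ Qbar)
    (hH₁ : IsHilbertClassField K₁ H₁) (hH₂ : IsHilbertClassField K₂ H₂) :
    (IsRamifiedExt (le_sup_left : K₁ ≤ K₁ ⊔ K₂) → H₁ ⊓ (K₁ ⊔ K₂) = K₁) ∧
    (IsRamifiedExt (le_sup_right : K₂ ≤ K₁ ⊔ K₂) → H₂ ⊓ (K₁ ⊔ K₂) = K₂) := by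
  have : FiniteDimensional ℚ ↥K₁ := Module.finite_of_finrank_pos hdeg₁.pos
  have : FiniteDimensional ℚ ↥K₂ := Module.finite_of_finrank_pos hdeg₂.pos
  obtain ⟨_, -, hunr₁⟩ := hH₁.1
  obtain ⟨_, -, hunr₂⟩ := hH₂.1
  exact ⟨fun hram ↦ inf_sup_eq_of_isRamifiedExt hgal₂ hdeg₂ rfl hram hunr₁,
    fun hram ↦ inf_sup_eq_of_isRamifiedExt hgal₁ hdeg₁ (sup_comm _ _) hram hunr₂⟩

/-- Let `K₁`, `K₂` be distinct Galois number fields of odd prime degrees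
whose Hilbert class fields are abelian over ℚ. If the compositum `K₁K₂` is ramified over
`Kᵢ`, then `H(Kᵢ) ∩ K₁K₂ = Kᵢ`. -/
theorem statement10 (K₁ K₂ : IntermediateField ℚ Qbar)
    [NumberField ↥K₁] [NumberField ↥K₂]
    (hne : K₁ ≠ K₂)
    (hgal₁ : IsGalois ℚ ↥K₁) (hgal₂ : IsGalois ℚ ↥K₂)
    (hdeg₁ : (finrank ℚ ↥K₁).Prime) (hodd₁ : Odd (finrank ℚ ↥K₁))
    (hdeg₂ : (finrank ℚ ↥K₂).Prime) (hodd₂ : Odd (finrank ℚ ↥K₂))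
    (H₁ H₂ : IntermediateField ℚ Qbar)
    (hH₁ : IsHilbertClassField K₁ H₁) (hH₂ : IsHilbertClassField K₂ H₂)
    (hab₁ : IsAbelianOverRat H₁) (hab₂ : IsAbelianOverRat H₂) :
    (IsRamifiedExt (le_sup_left : K₁ ≤ K₁ ⊔ K₂) → H₁ ⊓ (K₁ ⊔ K₂) = K₁) ∧
    (IsRamifiedExt (le_sup_right : K₂ ≤ K₁ ⊔ K₂) → H₂ ⊓ (K₁ ⊔ K₂) = K₂) :=
  statement10_general K₁ K₂ hgal₁ hgal₂ hdeg₁ hdeg₂ H₁ H₂ hH₁ hH₂
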